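/- arXiv:1510.05360 — 2 statements merged into one kernel-verified Lean document; each statement's English description precedes it below -/
import Mathlib

section
/- If G is a finite simple graph possessing at least one edge and k ≥ 1 is a natural number, then the k-independent graph I_k(G) is not a regular graph; that is, there is no natural number d such that every vertex of I_k(G) has degree d. -/
/-- A finset of vertices is independent if no two of its members are adjacent. -/
def IsIndep {V : Type*} (G : SimpleGraph V) (s : Finset V) : Prop :=
  ∀ u ∈ s, ∀ v ∈ s, ¬ G.Adj u v

/-- The `k`-independent graph of `G`: vertices are the independent sets of cardinality at most
`k`, two of them adjacent iff one is obtained from the other by adding a single vertex. -/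
def indepGraph {V : Type*} (G : SimpleGraph V) (k : ℕ) :
    SimpleGraph {s : Finset V // IsIndep G s ∧ s.card ≤ k} where
  Adj A B := (A.1 ⊆ B.1 ∧ B.1.card = A.1.card + 1) ∨ (B.1 ⊆ A.1 ∧ A.1.card = B.1.card + 1)
  symm := by
    constructor; rintro A B (⟨h1, h2⟩ | ⟨h1, h2⟩)
    · exact Or.inr ⟨h1, h2⟩
    · exact Or.inl ⟨h1, h2⟩
  loopless := by
    constructor; rintro A (⟨_, h⟩ | ⟨_, h⟩) <;> omega

instance {V : Type*} [DecidableEq V] (G : SimpleGraph V) [DecidableRel G.Adj] :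
    DecidablePred (IsIndep G) := fun s => by unfold IsIndep; infer_instance

instance {V : Type*} [DecidableEq V] (G : SimpleGraph V) (k : ℕ) :
    DecidableRel (indepGraph G k).Adj := fun A B =>
  inferInstanceAs (Decidable ((A.1 ⊆ B.1 ∧ B.1.card = A.1.card + 1) ∨
    (B.1 ⊆ A.1 ∧ A.1.card = B.1.card + 1)))

/-!
The neighbours of a vertex `A` of `indepGraph G k` are exactly the sets `A ∆ {w}` that are again
vertices, so the degree of `A` counts such `w`. Every singleton is a vertex once `k ≥ 1`, so the
empty set has degree `|V|`; for an edge `uv` the set `{u} ∆ {v} = {u, v}` is not independent, so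
`{u}` has degree less than `|V|`.
-/

open scoped symmDiff

namespace Finset

variable {α : Type*} [DecidableEq α] {s t : Finset α} {a : α}

lemma symmDiff_singleton_of_notMem (ha : a ∉ s) : s ∆ {a} = insert a s := by
  rw [symmDiff_eq_union (disjoint_singleton_right.2 ha), union_comm, insert_eq]

lemma symmDiff_singleton_of_mem (ha : a ∈ s) : s ∆ {a} = s.erase a := by
  rw [symmDiff_of_ge (singleton_subset_iff.2 ha), sdiff_singleton_eq_erase]

lemma covBy_iff_subset_and_card_eq : s ⋖ t ↔ s ⊆ t ∧ #t = #s + 1 := by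
  rw [covBy_iff_card_sdiff_eq_one]
  exact and_congr_right fun h => by rw [card_sdiff_of_subset h]; have := card_le_card h; omega

lemma exists_eq_symmDiff_singleton_iff : (∃ a, t = s ∆ {a}) ↔ s ⋖ t ∨ t ⋖ s := by
  constructor
  · rintro ⟨a, rfl⟩
    by_cases ha : a ∈ s
    · exact .inr (symmDiff_singleton_of_mem ha ▸ erase_covBy ha)
    · exact .inl (symmDiff_singleton_of_notMem ha ▸ covBy_insert ha)
  · rintro (h | h)
    · obtain ⟨a, ha, rfl⟩ := h.exists_finset_insert
      exact ⟨a, (symmDiff_singleton_of_notMem ha).symm⟩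
    · obtain ⟨a, ha, rfl⟩ := h.exists_finset_erase
      exact ⟨a, (symmDiff_singleton_of_mem ha).symm⟩

end Finset

open Finset

section
variable {V : Type*} (G : SimpleGraph V)

lemma isIndep_empty : IsIndep G ∅ := by simp [IsIndep]

lemma isIndep_singleton (u : V) : IsIndep G {u} := by simp [IsIndep]

lemma not_isIndep_pair [DecidableEq V] {u v : V} (h : G.Adj u v) : ¬ IsIndep G {u, v} :=
  fun hs => hs u (by simp) v (by simp) h

variable {G} {k : ℕ} [DecidableEq V]

lemma indepGraph_adj_iff_exists_symmDiff {A B : {s : Finset V // IsIndep G s ∧ #s ≤ k}} :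
    (indepGraph G k).Adj A B ↔ ∃ w, B.1 = A.1 ∆ {w} := by
  rw [exists_eq_symmDiff_singleton_iff, covBy_iff_subset_and_card_eq, covBy_iff_subset_and_card_eq]
  rfl

variable [Fintype V] [DecidableRel G.Adj]

lemma indepGraph_degree_eq_card_filter (A : {s : Finset V // IsIndep G s ∧ #s ≤ k}) :
    (indepGraph G k).degree A = #{w | IsIndep G (A.1 ∆ {w}) ∧ #(A.1 ∆ {w}) ≤ k} := by
  rw [← SimpleGraph.card_neighborFinset_eq_degree]
  symm
  refine card_bij (fun w hw => ⟨A.1 ∆ {w}, (mem_filter.1 hw).2⟩) (fun w _ => ?_) ?_ ?_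
  · exact (SimpleGraph.mem_neighborFinset _ _ _).2 (indepGraph_adj_iff_exists_symmDiff.2 ⟨w, rfl⟩)
  · intro w _ w' _ h
    simpa [symmDiff_right_inj] using congrArg Subtype.val h
  · intro B hB
    obtain ⟨w, hw⟩ :=
      indepGraph_adj_iff_exists_symmDiff.1 ((SimpleGraph.mem_neighborFinset _ _ _).1 hB)
    exact ⟨w, mem_filter.2 ⟨mem_univ w, hw ▸ B.2⟩, Subtype.ext hw.symm⟩

lemma indepGraph_degree_of_val_eq_empty (hk : 1 ≤ k) {A : {s : Finset V // IsIndep G s ∧ #s ≤ k}}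
    (hA : A.1 = ∅) : (indepGraph G k).degree A = Fintype.card V := by
  simp [indepGraph_degree_eq_card_filter, hA, symmDiff_singleton_of_notMem, isIndep_singleton, hk]

lemma indepGraph_degree_lt_of_val_eq_singleton {u v : V} (huv : G.Adj u v)
    {A : {s : Finset V // IsIndep G s ∧ #s ≤ k}} (hA : A.1 = {u}) :
    (indepGraph G k).degree A < Fintype.card V := by
  rw [indepGraph_degree_eq_card_filter, hA]
  refine card_lt_univ_of_notMem (x := v) ?_
  rw [mem_filter, symmDiff_singleton_of_notMem (by simpa using huv.ne.symm)]
  exact fun h => not_isIndep_pair G huv.symm h.2.1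

end

theorem indepGraph_not_regular {V : Type*} [Fintype V] [DecidableEq V] (G : SimpleGraph V)
    [DecidableRel G.Adj] (k : ℕ) (hk : 1 ≤ k) (he : ∃ u v, G.Adj u v) :
    ¬ ∃ d : ℕ, ∀ A, (indepGraph G k).degree A = d := by
  rintro ⟨d, hd⟩
  obtain ⟨u, v, huv⟩ := he
  let O : {s : Finset V // IsIndep G s ∧ #s ≤ k} := ⟨∅, isIndep_empty G, by simp⟩
  let U : {s : Finset V // IsIndep G s ∧ #s ≤ k} := ⟨{u}, isIndep_singleton G u, by simpa using hk⟩
  have hO : (indepGraph G k).degree O = Fintype.card V := indepGraph_degree_of_val_eq_empty hk rfl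
  have hU : (indepGraph G k).degree U < Fintype.card V :=
    indepGraph_degree_lt_of_val_eq_singleton huv rfl
  rw [hd] at hO hU
  omega
end

section
/- For every integer n ≥ 1, let e(G) and o(G) denote the numbers of independent sets of even and odd cardinality of a graph G, respectively (the empty set counts as even). Then for paths: e(P_{3n−2}) − o(P_{3n−2}) = 0, e(P_{3n−1}) − o(P_{3n−1}) = (−1)^n, and e(P_{3n}) − o(P_{3n}) = (−1)^n. -/
/-- The number of independent sets of even cardinality minus the number of independent sets of
odd cardinality, i.e. the value of the independence polynomial at -1. -/
noncomputable def evenOddDiff {V : Type*} (G : SimpleGraph V) : ℤ :=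
  (Nat.card {s : Finset V // IsIndep G s ∧ Even s.card} : ℤ) -
    (Nat.card {s : Finset V // IsIndep G s ∧ Odd s.card} : ℤ)

/-!
Number the vertices of `P_m` as `0, …, m - 1`: independent sets become the subsets of `range m`
with no two consecutive elements. Splitting such a subset of `range (m + 2)` according to whether
it contains `m + 1` gives `I(P_{m+2}; -1) = I(P_{m+1}; -1) - I(P_m; -1)`, so the values are
antiperiodic with period 3, and they are `0, -1, -1` for `m = 1, 2, 3`.
-/

open Finset

lemma evenOddDiff_eq_sum {V : Type*} [Fintype V] (G : SimpleGraph V) [DecidablePred (IsIndep G)] :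
    evenOddDiff G = ∑ s with IsIndep G s, (-1 : ℤ) ^ #s := by
  classical
  rw [← sum_filter_add_sum_filter_not _ (fun s => Even #s), filter_filter, filter_filter,
    sum_congr rfl fun s hs => (mem_filter.1 hs).2.2.neg_one_pow,
    sum_congr rfl fun s hs => (Nat.not_even_iff_odd.1 (mem_filter.1 hs).2.2).neg_one_pow]
  simp only [evenOddDiff, Nat.card_eq_fintype_card, Fintype.card_subtype, sum_const, smul_neg,
    Int.nsmul_eq_mul, mul_one, Nat.not_even_iff_odd, sub_eq_add_neg]

def NoTwoConsecutive (s : Finset ℕ) : Prop := ∀ i ∈ s, i + 1 ∉ s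

instance : DecidablePred NoTwoConsecutive := fun s =>
  inferInstanceAs (Decidable (∀ i ∈ s, i + 1 ∉ s))

def pathSignedCount (m : ℕ) : ℤ := ∑ s ∈ (range m).powerset with NoTwoConsecutive s, (-1) ^ #s

lemma isIndep_pathGraph_iff {m : ℕ} (s : Finset (Fin m)) :
    IsIndep (SimpleGraph.pathGraph m) s ↔ NoTwoConsecutive (s.image Fin.val) := by
  rw [NoTwoConsecutive, forall_mem_image]
  simp only [IsIndep, mem_image, SimpleGraph.pathGraph_adj, not_or, not_exists, not_and]
  exact ⟨fun h u hu v hv huv => (h u hu v hv).1 huv.symm,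
    fun h u hu v hv => ⟨fun huv => h hu v hv huv.symm, fun hvu => h hv u hu hvu.symm⟩⟩

lemma evenOddDiff_pathGraph (m : ℕ) :
    evenOddDiff (SimpleGraph.pathGraph m) = pathSignedCount m := by
  classical
  have hval : (univ : Finset (Fin m)).image Fin.val = range m := by
    rw [← Nat.Iio_eq_range, ← Fin.map_valEmbedding_univ, map_eq_image]; rfl
  rw [evenOddDiff_eq_sum, pathSignedCount, ← hval, powerset_image, sum_filter, sum_filter,
    sum_image (image_injective Fin.val_injective).injOn, powerset_univ]
  refine sum_congr rfl fun s _ => ?_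
  rw [card_image_of_injective _ Fin.val_injective]
  exact if_congr (isIndep_pathGraph_iff s) rfl rfl

lemma not_noTwoConsecutive_insert_insert (a : ℕ) (t : Finset ℕ) :
    ¬ NoTwoConsecutive (insert (a + 1) (insert a t)) :=
  fun h => h a (by simp) (by simp)

lemma noTwoConsecutive_insert_iff {m : ℕ} {t : Finset ℕ} (ht : t ⊆ range m) :
    NoTwoConsecutive (insert (m + 1) t) ↔ NoTwoConsecutive t := by
  have hlt : ∀ i ∈ t, i < m := fun i hi => mem_range.1 (ht hi)
  rw [NoTwoConsecutive, NoTwoConsecutive, forall_mem_insert]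
  simp only [mem_insert, not_or]
  refine ⟨fun h i hi => (h.2 i hi).2, fun h => ⟨⟨by omega, fun hm => ?_⟩, fun i hi => ⟨?_, h i hi⟩⟩⟩
  · exact absurd (hlt _ hm) (by omega)
  · exact fun him => absurd (hlt i hi) (by omega)

lemma pathSignedCount_add_two (m : ℕ) :
    pathSignedCount (m + 2) = pathSignedCount (m + 1) - pathSignedCount m := by
  have hsplit (f : Finset ℕ → ℤ) : ∑ t ∈ (range (m + 2)).powerset, f t =
      ∑ t ∈ (range (m + 1)).powerset, f t + (∑ t ∈ (range m).powerset, f (insert (m + 1) t) +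
        ∑ t ∈ (range m).powerset, f (insert (m + 1) (insert m t))) := by
    rw [range_add_one (n := m + 1), sum_powerset_insert notMem_range_self,
      add_right_inj, range_add_one, sum_powerset_insert notMem_range_self]
  simp only [pathSignedCount, sum_filter]
  rw [hsplit, sum_eq_zero fun t _ => if_neg (not_noTwoConsecutive_insert_insert m t), add_zero,
    sub_eq_add_neg, ← sum_neg_distrib]
  congr 1
  refine sum_congr rfl fun t ht => ?_
  have hm : m + 1 ∉ t := fun h => by simpa using mem_powerset.1 ht h
  rw [card_insert_of_notMem hm, pow_succ, mul_neg_one, apply_ite Neg.neg, neg_zero]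
  exact if_congr (noTwoConsecutive_insert_iff (mem_powerset.1 ht)) rfl rfl

lemma pathSignedCount_add_three (m : ℕ) : pathSignedCount (m + 3) = -pathSignedCount m := by
  rw [pathSignedCount_add_two, pathSignedCount_add_two]
  ring

lemma pathSignedCount_three_mul_add (k : ℕ) :
    pathSignedCount (3 * k + 1) = 0 ∧ pathSignedCount (3 * k + 2) = (-1) ^ (k + 1) ∧
      pathSignedCount (3 * k + 3) = (-1) ^ (k + 1) := by
  induction k with
  | zero => decide
  | succ k ih =>
    obtain ⟨h1, h2, h3⟩ := ih
    rw [show 3 * (k + 1) + 1 = 3 * k + 1 + 3 by ring, show 3 * (k + 1) + 2 = 3 * k + 2 + 3 by ring,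
      show 3 * (k + 1) + 3 = 3 * k + 3 + 3 by ring, pathSignedCount_add_three,
      pathSignedCount_add_three, pathSignedCount_add_three, h1, h2, h3, pow_succ _ (k + 1)]
    simp

theorem path_evenOddDiff (n : ℕ) (hn : 1 ≤ n) :
    evenOddDiff (SimpleGraph.pathGraph (3 * n - 2)) = 0 ∧
    evenOddDiff (SimpleGraph.pathGraph (3 * n - 1)) = (-1) ^ n ∧
    evenOddDiff (SimpleGraph.pathGraph (3 * n)) = (-1) ^ n := by
  obtain ⟨k, rfl⟩ := Nat.exists_eq_add_of_le' hn
  rw [show 3 * (k + 1) - 2 = 3 * k + 1 by omega, show 3 * (k + 1) - 1 = 3 * k + 2 by omega,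
    show 3 * (k + 1) = 3 * k + 3 by ring]
  simpa only [evenOddDiff_pathGraph] using pathSignedCount_three_mul_add k
end
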